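/- arXiv:2504.14270 — 4 statements merged into one kernel-verified Lean document; each statement's English description precedes it below -/
import Mathlib

section
/- Let X ⊆ ℝ^a and Y ⊆ ℝ^b be nonempty compact sets, let f : X × Y → ℝ be Lipschitz continuous, and let μ be a Borel probability measure on ℝ^b whose support is Y (i.e. μ(Y) = 1 and every open set that meets Y has positive μ-measure). Then for every ε > 0, the infimum over x ∈ X of μ({y ∈ Y : f(x, y) ≥ sup_{y' ∈ Y} f(x, y') − ε}) is strictly positive. -/
open MeasureTheory

/-- Let X ⊆ ℝ^a and Y ⊆ ℝ^b be nonempty compact sets, f : ℝ^a × ℝ^b → ℝ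
Lipschitz on X × Y (with respect to the product sup-norm metric), and μ a Borel
probability measure with support Y (μ Y = 1 and every open set meeting Y has positive
measure). Then for every ε > 0 the infimum over x ∈ X of
μ {y ∈ Y | f(x,y) ≥ sup_{y' ∈ Y} f(x,y') − ε} is strictly positive. -/
theorem inf_prob_close_to_sup_pos
    (a b : ℕ) (X : Set (Fin a → ℝ)) (Y : Set (Fin b → ℝ))
    (hXne : X.Nonempty) (hXc : IsCompact X) (hYne : Y.Nonempty) (hYc : IsCompact Y)
    (f : (Fin a → ℝ) × (Fin b → ℝ) → ℝ) (K : NNReal)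
    (hf : LipschitzOnWith K f (X ×ˢ Y))
    (μ : Measure (Fin b → ℝ)) [IsProbabilityMeasure μ]
    (hμY : μ Y = 1)
    (hsupp : ∀ U : Set (Fin b → ℝ), IsOpen U → (U ∩ Y).Nonempty → 0 < μ U)
    (ε : ℝ) (hε : 0 < ε) :
    0 < ⨅ x ∈ X, μ {y | y ∈ Y ∧ sSup ((fun y' => f (x, y')) '' Y) - ε ≤ f (x, y)} := by
  have hYmeas : MeasurableSet Y := hYc.isClosed.measurableSet
  have hμYc : μ Yᶜ = 0 := by
    have h1 := measure_compl hYmeas (measure_ne_top μ Y)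
    rw [hμY, measure_univ] at h1
    simpa using h1
  set h : (Fin a → ℝ) → ℝ := fun x => sSup ((fun y' => f (x, y')) '' Y) with hhdef
  have hdistf : ∀ p ∈ X ×ˢ Y, ∀ q ∈ X ×ˢ Y, dist (f p) (f q) ≤ K * dist p q :=
    fun p hp q hq => hf.dist_le_mul p hp q hq
  have hcont : ∀ x ∈ X, ContinuousOn (fun y => f (x, y)) Y := by
    intro x hx
    have hl : LipschitzOnWith K (fun y => f (x, y)) Y := by
      rw [lipschitzOnWith_iff_dist_le_mul]
      intro y hy y' hy'
      have := hdistf (x, y) ⟨hx, hy⟩ (x, y') ⟨hx, hy'⟩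
      simpa [Prod.dist_eq, dist_self, max_eq_right dist_nonneg] using this
    exact hl.continuousOn
  have hbdd : ∀ x ∈ X, BddAbove ((fun y' => f (x, y')) '' Y) := fun x hx =>
    (hYc.image_of_continuousOn (hcont x hx)).bddAbove
  have himg : ∀ x, ((fun y' => f (x, y')) '' Y).Nonempty := fun x => hYne.image _
  have hle : ∀ x ∈ X, ∀ y ∈ Y, f (x, y) ≤ h x := fun x hx y hy =>
    le_csSup (hbdd x hx) (Set.mem_image_of_mem _ hy)
  set δ : ℝ := ε / (4 * (K + 1)) with hδdef
  have hKpos : (0:ℝ) < 4 * (K + 1) := by positivity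
  have hδpos : 0 < δ := by positivity
  have hK0 : (0:ℝ) ≤ K := K.coe_nonneg
  have hδε : δ * (4 * (K + 1)) = ε := div_mul_cancel₀ ε (ne_of_gt hKpos)
  have hKδ : (K:ℝ) * δ ≤ ε / 4 := by nlinarith [hδpos, hK0, hδε]
  have key : ∀ x ∈ X, 0 < μ {y | y ∈ Y ∧ h x - ε/2 ≤ f (x, y)} := by
    intro x hx
    obtain ⟨v, hv, hv2⟩ := exists_lt_of_lt_csSup (himg x)
      (show h x - ε/4 < h x by linarith)
    obtain ⟨y0, hy0Y, rfl⟩ := hv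
    have hUpos := hsupp (Metric.ball y0 δ) Metric.isOpen_ball
      ⟨y0, Metric.mem_ball_self hδpos, hy0Y⟩
    have hsub : Metric.ball y0 δ ∩ Y ⊆ {y | y ∈ Y ∧ h x - ε/2 ≤ f (x, y)} := by
      rintro y ⟨hyb, hyY⟩
      refine ⟨hyY, ?_⟩
      have hd := hdistf (x, y) ⟨hx, hyY⟩ (x, y0) ⟨hx, hy0Y⟩
      have hdy : dist y y0 < δ := Metric.mem_ball.mp hyb
      rw [show dist ((x, y) : _ × _) (x, y0) = dist y y0 by
        simp [Prod.dist_eq, dist_self, le_max_iff, dist_nonneg], Real.dist_eq] at hd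
      have h1 := (abs_le.mp hd).1
      have hm : (K:ℝ) * dist y y0 ≤ K * δ := mul_le_mul_of_nonneg_left hdy.le hK0
      linarith
    have hdiff0 : μ (Metric.ball y0 δ \ Y) = 0 :=
      measure_mono_null (fun y hy => hy.2) hμYc
    have heq : μ (Metric.ball y0 δ) = μ (Metric.ball y0 δ ∩ Y) := by
      rw [← measure_inter_add_diff (Metric.ball y0 δ) hYmeas, hdiff0, add_zero]
    calc (0 : ENNReal) < μ (Metric.ball y0 δ) := hUpos
      _ = μ (Metric.ball y0 δ ∩ Y) := heq
      _ ≤ μ {y | y ∈ Y ∧ h x - ε/2 ≤ f (x, y)} := measure_mono hsub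
  have hsupcmp : ∀ x ∈ X, ∀ x' ∈ X, dist x x' ≤ δ → h x' ≤ h x + K * δ := by
    intro x hx x' hx' hd
    apply csSup_le (himg x')
    rintro v ⟨y, hy, rfl⟩
    have hd2 := hdistf (x', y) ⟨hx', hy⟩ (x, y) ⟨hx, hy⟩
    rw [show dist ((x', y) : _ × _) (x, y) = dist x' x by
      simp [Prod.dist_eq, dist_self, le_max_iff, dist_nonneg], Real.dist_eq] at hd2
    have h1 := (abs_le.mp hd2).2
    have hm : (K:ℝ) * dist x' x ≤ K * δ :=
      mul_le_mul_of_nonneg_left (by rwa [dist_comm]) hK0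
    have := hle x hx y hy
    linarith
  have hcompare : ∀ x ∈ X, ∀ x' ∈ X, dist x x' ≤ δ →
      {y | y ∈ Y ∧ h x - ε/2 ≤ f (x, y)} ⊆ {y | y ∈ Y ∧ h x' - ε ≤ f (x', y)} := by
    intro x hx x' hx' hd
    rintro y ⟨hyY, hyf⟩
    refine ⟨hyY, ?_⟩
    have hd2 := hdistf (x', y) ⟨hx', hyY⟩ (x, y) ⟨hx, hyY⟩
    rw [show dist ((x', y) : _ × _) (x, y) = dist x' x by
      simp [Prod.dist_eq, dist_self, le_max_iff, dist_nonneg], Real.dist_eq] at hd2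
    have h1 := (abs_le.mp hd2).1
    have hm : (K:ℝ) * dist x' x ≤ K * δ :=
      mul_le_mul_of_nonneg_left (by rwa [dist_comm]) hK0
    have hs := hsupcmp x hx x' hx' hd
    linarith
  obtain ⟨t, htX, hcover⟩ := hXc.elim_nhds_subcover (fun x => Metric.ball x δ)
    (fun x _ => Metric.ball_mem_nhds x hδpos)
  have htne : t.Nonempty := by
    obtain ⟨x0, hx0⟩ := hXne
    obtain ⟨i, hi, _⟩ := Set.mem_iUnion₂.mp (hcover hx0)
    exact ⟨i, hi⟩
  obtain ⟨i0, hi0t, hi0min⟩ :=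
    t.exists_min_image (fun i => μ {y | y ∈ Y ∧ h i - ε/2 ≤ f (i, y)}) htne
  refine lt_of_lt_of_le (key i0 (htX i0 hi0t)) (le_iInf₂ fun x hx => ?_)
  obtain ⟨i, hit, hxb⟩ := Set.mem_iUnion₂.mp (hcover hx)
  have hdist : dist i x ≤ δ := by rw [dist_comm]; exact (Metric.mem_ball.mp hxb).le
  calc μ {y | y ∈ Y ∧ h i0 - ε/2 ≤ f (i0, y)}
      ≤ μ {y | y ∈ Y ∧ h i - ε/2 ≤ f (i, y)} := hi0min i hit
    _ ≤ μ {y | y ∈ Y ∧ h x - ε ≤ f (x, y)} :=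
        measure_mono (hcompare i (htX i hit) x hx hdist)
end

section
/- Let M be a measurable space, let μ₀ and μ₁ be probability measures on M, let R be a measurable subset of M × M, and let ν, ν′ ≥ 0. Suppose {S_1, ..., S_ℓ} ∪ {T} is a measurable partition of M such that S_i × S_i ⊆ R for each i ∈ {1,...,ℓ}, that |μ₀(S_i) − μ₁(S_i)| ≤ ν/ℓ for all i ∈ {1,...,ℓ}, and that μ₀(T) + μ₁(T) ≤ ν′. Then there exists a probability measure π on M × M whose first marginal is μ₀ and whose second marginal is μ₁, and such that π(R) ≥ 1 − ν − ν′. -/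
open MeasureTheory
open scoped ENNReal

private lemma map_finset_sum' {α β ι : Type*} [MeasurableSpace α] [MeasurableSpace β]
    {f : α → β} (hf : Measurable f) (s : Finset ι) (μ : ι → Measure α) :
    (∑ i ∈ s, μ i).map f = ∑ i ∈ s, (μ i).map f := by
  classical
  induction s using Finset.induction_on with
  | empty => simp
  | insert _ _ h ih =>
    rw [Finset.sum_insert h, Finset.sum_insert h, Measure.map_add _ _ hf, ih]

/-- Given probability measures μ₀, μ₁ on M, a measurable R ⊆ M × M,
ν, ν′ ≥ 0, and a measurable partition {S_1, ..., S_ℓ} ∪ {T} of M with S_i × S_i ⊆ R,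
|μ₀(S_i) − μ₁(S_i)| ≤ ν/ℓ for all i, and μ₀(T) + μ₁(T) ≤ ν′, there is a coupling π of
μ₀ and μ₁ with π(R) ≥ 1 − ν − ν′. -/
theorem exists_coupling_of_partition
    {M : Type*} [MeasurableSpace M] (μ₀ μ₁ : Measure M)
    [IsProbabilityMeasure μ₀] [IsProbabilityMeasure μ₁]
    (R : Set (M × M)) (hR : MeasurableSet R)
    (ν ν' : ℝ) (hν : 0 ≤ ν) (hν' : 0 ≤ ν')
    (ℓ : ℕ) (hℓ : 1 ≤ ℓ) (S : Fin ℓ → Set M) (T : Set M)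
    (hSmeas : ∀ i, MeasurableSet (S i)) (hTmeas : MeasurableSet T)
    (hSdisj : Pairwise (Function.onFun Disjoint S))
    (hSTdisj : ∀ i, Disjoint (S i) T)
    (hcover : (⋃ i, S i) ∪ T = Set.univ)
    (hSR : ∀ i, S i ×ˢ S i ⊆ R)
    (hclose : ∀ i, |(μ₀ (S i)).toReal - (μ₁ (S i)).toReal| ≤ ν / ℓ)
    (hT : (μ₀ T).toReal + (μ₁ T).toReal ≤ ν') :
    ∃ π : Measure (M × M), IsProbabilityMeasure π ∧
      π.map Prod.fst = μ₀ ∧ π.map Prod.snd = μ₁ ∧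
      ENNReal.ofReal (1 - ν - ν') ≤ π R := by
  classical
  set a : Fin ℓ → ℝ≥0∞ := fun i => μ₀ (S i) with ha
  set b : Fin ℓ → ℝ≥0∞ := fun i => μ₁ (S i) with hb
  set m : Fin ℓ → ℝ≥0∞ := fun i => max (a i) (b i) with hm
  have ha_le : ∀ i, a i ≤ 1 := fun i => prob_le_one
  have hb_le : ∀ i, b i ≤ 1 := fun i => prob_le_one
  have ha_ne_top : ∀ i, a i ≠ ∞ := fun i => ((ha_le i).trans_lt ENNReal.one_lt_top).ne
  have hb_ne_top : ∀ i, b i ≠ ∞ := fun i => ((hb_le i).trans_lt ENNReal.one_lt_top).ne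
  have hm_ne_top : ∀ i, m i ≠ ∞ := fun i =>
    ((max_le (ha_le i) (hb_le i)).trans_lt ENNReal.one_lt_top).ne
  -- the coupling restricted to the squares
  set π₁ : Measure (M × M) :=
    ∑ i, (m i)⁻¹ • ((μ₀.restrict (S i)).prod (μ₁.restrict (S i))) with hπ₁
  -- decomposition of μ₀ and μ₁ by the partition
  have hdecomp₀ : μ₀ = (∑ i, μ₀.restrict (S i)) + μ₀.restrict T := by
    conv_lhs => rw [← Measure.restrict_univ (μ := μ₀), ← hcover]
    rw [Measure.restrict_union (Set.disjoint_iUnion_left.2 hSTdisj) hTmeas,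
      Measure.restrict_iUnion hSdisj hSmeas, Measure.sum_fintype]
  have hdecomp₁ : μ₁ = (∑ i, μ₁.restrict (S i)) + μ₁.restrict T := by
    conv_lhs => rw [← Measure.restrict_univ (μ := μ₁), ← hcover]
    rw [Measure.restrict_union (Set.disjoint_iUnion_left.2 hSTdisj) hTmeas,
      Measure.restrict_iUnion hSdisj hSmeas, Measure.sum_fintype]
  have hcoef₀ : ∀ i, (m i)⁻¹ * b i ≤ 1 := by
    intro i
    rcases eq_or_ne (m i) 0 with h0 | h0
    · have : b i = 0 := le_antisymm (h0 ▸ le_max_right (a i) (b i)) bot_le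
      simp [this]
    · calc (m i)⁻¹ * b i ≤ (m i)⁻¹ * m i := by gcongr; exact le_max_right _ _
        _ = 1 := ENNReal.inv_mul_cancel h0 (hm_ne_top i)
  have hcoef₁ : ∀ i, (m i)⁻¹ * a i ≤ 1 := by
    intro i
    rcases eq_or_ne (m i) 0 with h0 | h0
    · have : a i = 0 := le_antisymm (h0 ▸ le_max_left (a i) (b i)) bot_le
      simp [this]
    · calc (m i)⁻¹ * a i ≤ (m i)⁻¹ * m i := by gcongr; exact le_max_left _ _
        _ = 1 := ENNReal.inv_mul_cancel h0 (hm_ne_top i)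
  -- residual measures
  set α : Measure M :=
    (∑ i, (1 - (m i)⁻¹ * b i) • μ₀.restrict (S i)) + μ₀.restrict T with hα
  set β : Measure M :=
    (∑ i, (1 - (m i)⁻¹ * a i) • μ₁.restrict (S i)) + μ₁.restrict T with hβ
  -- marginals of π₁
  have hfst₁ : π₁.map Prod.fst = ∑ i, ((m i)⁻¹ * b i) • μ₀.restrict (S i) := by
    rw [hπ₁, map_finset_sum' measurable_fst]
    refine Finset.sum_congr rfl fun i _ => ?_
    rw [Measure.map_smul, Measure.map_fst_prod, Measure.restrict_apply_univ, smul_smul]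
  have hsnd₁ : π₁.map Prod.snd = ∑ i, ((m i)⁻¹ * a i) • μ₁.restrict (S i) := by
    rw [hπ₁, map_finset_sum' measurable_snd]
    refine Finset.sum_congr rfl fun i _ => ?_
    rw [Measure.map_smul, Measure.map_snd_prod, Measure.restrict_apply_univ, smul_smul]
  have hfst : π₁.map Prod.fst + α = μ₀ := by
    rw [hfst₁, hα, ← add_assoc, ← Finset.sum_add_distrib]
    conv_rhs => rw [hdecomp₀]
    congr 1
    refine Finset.sum_congr rfl fun i _ => ?_
    rw [← add_smul, add_tsub_cancel_of_le (hcoef₀ i), one_smul]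
  have hsnd : π₁.map Prod.snd + β = μ₁ := by
    rw [hsnd₁, hβ, ← add_assoc, ← Finset.sum_add_distrib]
    conv_rhs => rw [hdecomp₁]
    congr 1
    refine Finset.sum_congr rfl fun i _ => ?_
    rw [← add_smul, add_tsub_cancel_of_le (hcoef₁ i), one_smul]
  -- total masses
  have hπ₁fst_univ : (π₁.map Prod.fst) Set.univ = π₁ Set.univ := by
    rw [Measure.map_apply measurable_fst MeasurableSet.univ, Set.preimage_univ]
  have hπ₁snd_univ : (π₁.map Prod.snd) Set.univ = π₁ Set.univ := by
    rw [Measure.map_apply measurable_snd MeasurableSet.univ, Set.preimage_univ]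
  have hαuniv : π₁ Set.univ + α Set.univ = 1 := by
    rw [← hπ₁fst_univ, ← Measure.add_apply, hfst, measure_univ]
  have hβuniv : π₁ Set.univ + β Set.univ = 1 := by
    rw [← hπ₁snd_univ, ← Measure.add_apply, hsnd, measure_univ]
  have hπ₁_le : π₁ Set.univ ≤ 1 := le_of_add_le_left hαuniv.le
  have hπ₁_ne_top : π₁ Set.univ ≠ ∞ := (hπ₁_le.trans_lt ENNReal.one_lt_top).ne
  set t : ℝ≥0∞ := α Set.univ with ht
  have hβt : β Set.univ = t :=
    (ENNReal.add_right_inj hπ₁_ne_top).1 (hβuniv.trans hαuniv.symm)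
  have ht_le : t ≤ 1 := le_of_add_le_right hαuniv.le
  have ht_ne_top : t ≠ ∞ := (ht_le.trans_lt ENNReal.one_lt_top).ne
  have hαfin : IsFiniteMeasure α := ⟨ht_le.trans_lt ENNReal.one_lt_top⟩
  have hβfin : IsFiniteMeasure β := ⟨by rw [hβt]; exact ht_le.trans_lt ENNReal.one_lt_top⟩
  -- the full coupling
  set π : Measure (M × M) := π₁ + t⁻¹ • (α.prod β) with hπ
  have hmap_fst : π.map Prod.fst = μ₀ := by
    rcases eq_or_ne t 0 with h0 | h0
    · have hα0 : α = 0 := by rw [← Measure.measure_univ_eq_zero, ← ht, h0]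
      rw [hπ, Measure.map_add _ _ measurable_fst, hα0, Measure.zero_prod, smul_zero,
        Measure.map_zero, ← hfst, hα0, add_zero]
    · rw [hπ, Measure.map_add _ _ measurable_fst, Measure.map_smul,
        Measure.map_fst_prod, hβt, smul_smul, ENNReal.inv_mul_cancel h0 ht_ne_top,
        one_smul, hfst]
  have hmap_snd : π.map Prod.snd = μ₁ := by
    rcases eq_or_ne t 0 with h0 | h0
    · have hβ0 : β = 0 := by rw [← Measure.measure_univ_eq_zero, hβt, h0]
      rw [hπ, Measure.map_add _ _ measurable_snd, hβ0, Measure.prod_zero, smul_zero,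
        Measure.map_zero, ← hsnd, hβ0, add_zero]
    · rw [hπ, Measure.map_add _ _ measurable_snd, Measure.map_smul,
        Measure.map_snd_prod, ← ht, smul_smul, ENNReal.inv_mul_cancel h0 ht_ne_top,
        one_smul, hsnd]
  have hprob : IsProbabilityMeasure π := by
    constructor
    have := congrArg (fun μ : Measure M => μ Set.univ) hmap_fst
    simpa [Measure.map_apply measurable_fst MeasurableSet.univ] using this
  refine ⟨π, hprob, hmap_fst, hmap_snd, ?_⟩
  -- lower bound on π R
  have hmin : ∀ i, min (a i) (b i) ≤
      ((m i)⁻¹ • ((μ₀.restrict (S i)).prod (μ₁.restrict (S i)))) R := by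
    intro i
    have hsq : (a i) * (b i) ≤ ((μ₀.restrict (S i)).prod (μ₁.restrict (S i))) R := by
      calc (a i) * (b i)
          = ((μ₀.restrict (S i)).prod (μ₁.restrict (S i))) (S i ×ˢ S i) := by
            rw [Measure.prod_prod, Measure.restrict_apply_self, Measure.restrict_apply_self]
        _ ≤ _ := measure_mono (hSR i)
    rcases eq_or_ne (m i) 0 with h0 | h0
    · have : a i = 0 := le_antisymm (h0 ▸ le_max_left (a i) (b i)) bot_le
      simp [this]
    · have hab : a i * b i = min (a i) (b i) * m i := (min_mul_max (a i) (b i)).symm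
      calc min (a i) (b i)
          = (m i)⁻¹ * (min (a i) (b i) * m i) := by
            rw [mul_comm (min (a i) (b i)) (m i), ← mul_assoc,
              ENNReal.inv_mul_cancel h0 (hm_ne_top i), one_mul]
        _ = (m i)⁻¹ * (a i * b i) := by rw [← hab]
        _ ≤ (m i)⁻¹ * ((μ₀.restrict (S i)).prod (μ₁.restrict (S i))) R := by gcongr
        _ = _ := by rw [Measure.smul_apply, smul_eq_mul]
  have hπ₁R : (∑ i, min (a i) (b i)) ≤ π₁ R := by
    rw [hπ₁, Measure.finset_sum_apply]
    exact Finset.sum_le_sum fun i _ => hmin i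
  have hsum_ne_top : (∑ i, min (a i) (b i)) ≠ ∞ := by
    refine (ENNReal.sum_lt_top.2 fun i _ => ?_).ne
    exact (min_le_left _ _).trans_lt (lt_of_le_of_ne le_top (ha_ne_top i))
  have hfinal : ENNReal.ofReal (1 - ν - ν') ≤ ∑ i, min (a i) (b i) := by
    rw [ENNReal.ofReal_le_iff_le_toReal hsum_ne_top,
      ENNReal.toReal_sum (fun i _ => ((min_le_left _ _).trans_lt
        (lt_of_le_of_ne le_top (ha_ne_top i))).ne)]
    have hmin_toReal : ∀ i, (min (a i) (b i)).toReal =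
        min (a i).toReal (b i).toReal := fun i =>
      ENNReal.toReal_min (ha_ne_top i) (hb_ne_top i)
    -- sum of a i
    have hsum_a : (∑ i, (a i).toReal) + (μ₀ T).toReal = 1 := by
      have h1 : (∑ i, a i) + μ₀ T = 1 := by
        have := congrArg (fun μ : Measure M => μ Set.univ) hdecomp₀
        simp only [Measure.add_apply, Measure.finset_sum_apply,
          Measure.restrict_apply_univ, measure_univ] at this
        exact this.symm
      have := congrArg ENNReal.toReal h1
      rwa [ENNReal.toReal_add (ENNReal.sum_lt_top.2 fun i _ =>
          lt_of_le_of_ne le_top (ha_ne_top i)).ne (measure_ne_top μ₀ T),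
        ENNReal.toReal_sum (fun i _ => ha_ne_top i), ENNReal.toReal_one] at this
    have hμ₀T : (μ₀ T).toReal ≤ ν' := by
      have := ENNReal.toReal_nonneg (a := μ₁ T)
      linarith
    have hterm : ∀ i, (a i).toReal - ν / ℓ ≤ min (a i).toReal (b i).toReal := by
      intro i
      have habs := abs_le.mp (hclose i)
      have hνℓ : 0 ≤ ν / ℓ := div_nonneg hν (Nat.cast_nonneg ℓ)
      refine le_min (by linarith) (by linarith [habs.2])
    have hsum_const : (∑ _i : Fin ℓ, ν / ℓ) = ν := by
      rw [Finset.sum_const, Finset.card_univ, Fintype.card_fin, nsmul_eq_mul]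
      field_simp
    calc 1 - ν - ν' ≤ (∑ i, (a i).toReal) - ν := by linarith
      _ = ∑ i, ((a i).toReal - ν / ℓ) := by
          rw [Finset.sum_sub_distrib, hsum_const]
      _ ≤ ∑ i, min (a i).toReal (b i).toReal := Finset.sum_le_sum fun i _ => hterm i
      _ = ∑ i, (min (a i) (b i)).toReal := by
          exact Finset.sum_congr rfl fun i _ => (hmin_toReal i).symm
  calc ENNReal.ofReal (1 - ν - ν') ≤ ∑ i, min (a i) (b i) := hfinal
    _ ≤ π₁ R := hπ₁R
    _ ≤ π R := by rw [hπ]; exact le_add_right le_rfl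
end

section
/- Fix a constant c > 0 and an integer r ≥ 3. Consider the Erdős–Rényi random graph G(n, c/n) and the fixed vertex indexed 0 of Fin n. The probability that there exists a vertex w lying on a cycle of length at most r such that the graph contains a walk of length at most r from vertex 0 to w tends to 0 as n → ∞. -/
open MeasureTheory Filter

noncomputable def erMeasure (n : ℕ) (p : ENNReal) (hp : p ≤ 1) :
    Measure ({e : Sym2 (Fin n) // ¬ e.IsDiag} → Bool) :=
  Measure.pi fun _ => (PMF.bernoulli p.toNNReal
    (by simpa using ENNReal.toNNReal_mono ENNReal.one_ne_top hp)).toMeasure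

def graphOf (n : ℕ) (f : {e : Sym2 (Fin n) // ¬ e.IsDiag} → Bool) :
    SimpleGraph (Fin n) where
  Adj u v := ∃ h : u ≠ v, f ⟨s(u, v), fun hd => h (Sym2.mk_isDiag_iff.mp hd)⟩ = true
  symm := by
    constructor
    rintro u v ⟨h, hf⟩
    refine ⟨h.symm, ?_⟩
    have he : (⟨s(v, u), fun hd => h.symm (Sym2.mk_isDiag_iff.mp hd)⟩ :
        {e : Sym2 (Fin n) // ¬ e.IsDiag}) =
        ⟨s(u, v), fun hd => h (Sym2.mk_isDiag_iff.mp hd)⟩ :=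
      Subtype.ext (Sym2.eq_swap)
    rw [he]; exact hf
  loopless := by constructor; rintro u ⟨h, _⟩; exact h rfl

section aux

/-- The badSet: a fixed injective vertex sequence forming a path with a chord. -/
def badSet (N : ℕ) (m : ℕ) (j : Fin (m+1)) (z : Fin (m+1) → Fin N) :
    Set ({e : Sym2 (Fin N) // ¬ e.IsDiag} → Bool) :=
  {f | Function.Injective z ∧ (j : ℕ) + 2 ≤ m ∧
    (∀ i : Fin m, (graphOf N f).Adj (z i.castSucc) (z i.succ)) ∧
    (graphOf N f).Adj (z (Fin.last m)) (z j)}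

variable {V : Type*} [DecidableEq V] {G : SimpleGraph V}


lemma exists_prefix_firstMem (S : List V) :
    ∀ {u v : V} (W : G.Walk u v), W.IsPath → v ∈ S →
    ∃ (a : V) (W1 : G.Walk u a), W1.IsPath ∧ W1.length ≤ W.length ∧ a ∈ S ∧
      W1.support ⊆ W.support ∧ (∀ b ∈ W1.support, b ∈ S → b = a) := by
  intro u v W
  induction W with
  | nil =>
    intro _ hv
    exact ⟨_, SimpleGraph.Walk.nil, SimpleGraph.Walk.IsPath.nil, le_refl _, hv,
      fun b hb => hb, by simp⟩
  | @cons u u' v h W' ih =>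
    intro hP hv
    by_cases hu : u ∈ S
    · refine ⟨u, SimpleGraph.Walk.nil, SimpleGraph.Walk.IsPath.nil, Nat.zero_le _, hu, ?_, by simp⟩
      intro b hb
      simp only [SimpleGraph.Walk.support_nil, List.mem_singleton] at hb
      subst hb; exact SimpleGraph.Walk.start_mem_support _
    · rw [SimpleGraph.Walk.cons_isPath_iff] at hP
      obtain ⟨a, W1', hp1, hl1, ha, hsub, hfirst⟩ := ih hP.1 hv
      refine ⟨a, SimpleGraph.Walk.cons h W1', ?_, ?_, ha, ?_, ?_⟩
      · rw [SimpleGraph.Walk.cons_isPath_iff]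
        exact ⟨hp1, fun hc => hP.2 (hsub hc)⟩
      · simpa using Nat.succ_le_succ hl1
      · rw [SimpleGraph.Walk.support_cons, SimpleGraph.Walk.support_cons]
        intro b hb
        rcases List.mem_cons.mp hb with rfl | hb
        · exact List.mem_cons_self
        · exact List.mem_cons_of_mem _ (hsub hb)
      · intro b hb hbS
        rw [SimpleGraph.Walk.support_cons] at hb
        rcases List.mem_cons.mp hb with rfl | hb
        · exact absurd hbS hu
        · exact hfirst b hb hbS

lemma length_rotate {u v : V} (c : G.Walk v v) (h : u ∈ c.support) :
    (c.rotate u h).length = c.length := by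
  have := congr_arg SimpleGraph.Walk.length (c.take_spec h)
  rw [SimpleGraph.Walk.length_append] at this
  rw [SimpleGraph.Walk.rotate, SimpleGraph.Walk.length_append]
  omega

lemma extract_structure (v0 w x : V) (r : ℕ)
    (p : G.Walk x x) (hp : p.IsCycle) (hpl : p.length ≤ r) (hw : w ∈ p.support)
    (q : G.Walk v0 w) (hql : q.length ≤ r) :
    ∃ (m j : ℕ) (_ : 2 ≤ m) (_ : m ≤ 2*r) (hj : j + 2 ≤ m) (z : Fin (m+1) → V),
      Function.Injective z ∧ z 0 = v0 ∧
      (∀ i : Fin m, G.Adj (z i.castSucc) (z i.succ)) ∧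
      G.Adj (z (Fin.last m)) (z ⟨j, by omega⟩) := by
  classical
  obtain ⟨a, P1, hP1p, hP1l, haS, _, hfirst⟩ :=
    exists_prefix_firstMem p.support q.toPath.val q.toPath.prop hw
  have hP1r : P1.length ≤ r := by
    refine le_trans hP1l (le_trans ?_ hql)
    exact SimpleGraph.Walk.length_bypass_le q
  set c := p.rotate a haS with hcdef
  have hcyc : c.IsCycle := hp.rotate haS
  have hclen : c.length = p.length := length_rotate p haS
  have hL0 : 3 ≤ c.length := hcyc.three_le_length
  have hL0r : c.length ≤ r := by omega
  set T := c.support.tail with hTdef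
  have hTlen : T.length = c.length := by
    rw [hTdef, List.length_tail, SimpleGraph.Walk.length_support]
    omega
  have hTne : T ≠ [] := by
    intro h; rw [h] at hTlen; simp at hTlen; omega
  have hTnd : T.Nodup := hcyc.support_nodup
  have hTlast : T.getLast hTne = a := by
    simp only [hTdef, List.getLast_tail]
    exact SimpleGraph.Walk.getLast_support c
  have hDT : T.dropLast ++ [a] = T := by
    conv_rhs => rw [← List.dropLast_append_getLast hTne, hTlast]
  set D := T.dropLast with hDdef
  have hDlen : D.length = c.length - 1 := by
    rw [hDdef, List.length_dropLast, hTlen]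
  have hDne : D ≠ [] := by
    intro h; rw [h] at hDlen; simp at hDlen; omega
  have hDnd : D.Nodup := List.Nodup.sublist (List.dropLast_sublist T) hTnd
  have haD : a ∉ D := by
    intro haD
    have := List.disjoint_of_nodup_append (l₂ := [a]) (by rw [hDT]; exact hTnd)
    exact this haD (List.mem_singleton_self a)
  have hmemTp : ∀ b ∈ T, b ∈ p.support := by
    intro b hb
    have hrot := SimpleGraph.Walk.support_rotate p a haS
    exact List.mem_of_mem_tail (hrot.mem_iff.mp hb)
  have hdisj : List.Disjoint P1.support D := by
    intro b hb1 hbD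
    have hbT : b ∈ T := List.Sublist.mem hbD (List.dropLast_sublist T)
    have : b = a := hfirst b hb1 (hmemTp b hbT)
    subst this
    exact haD hbD
  -- the combined list
  set L := P1.support ++ D with hLdef
  have hP1slen : P1.support.length = P1.length + 1 := SimpleGraph.Walk.length_support P1
  have hLlen : L.length = P1.length + 1 + D.length := by
    rw [hLdef, List.length_append, hP1slen]
  have hLnd : L.Nodup := List.Nodup.append hP1p.support_nodup hDnd hdisj
  -- chain of c.support
  have hsupc : c.support = a :: T := SimpleGraph.Walk.support_eq_cons c
  have hchainc : List.Chain' G.Adj (a :: T) := by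
    rw [← hsupc]; exact SimpleGraph.Walk.isChain_adj_support c
  have hchainT : List.Chain' G.Adj T := hchainc.tail
  have hchainD : List.Chain' G.Adj D := hchainT.prefix (List.dropLast_prefix T)
  have hP1last : P1.support.getLast (SimpleGraph.Walk.support_ne_nil _) = a :=
    SimpleGraph.Walk.getLast_support P1
  have hheadD : D.head? = T.head? := by
    obtain ⟨d, D', hD'⟩ := List.exists_cons_of_ne_nil hDne
    rw [hD', ← hDT, hD']; rfl
  have hchainL : List.Chain' G.Adj L := by
    show List.IsChain G.Adj (P1.support ++ D)
    rw [List.isChain_append]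
    refine ⟨SimpleGraph.Walk.isChain_adj_support P1, hchainD, ?_⟩
    intro xx hx yy hy
    rw [List.getLast?_eq_getLast (SimpleGraph.Walk.support_ne_nil _)] at hx
    rw [Option.mem_some_iff] at hx
    rw [hP1last] at hx
    subst hx
    rw [hheadD] at hy
    exact hchainc.rel_head? hy
  -- the chord
  have hchord : G.Adj (D.getLast hDne) a := by
    have h2 : List.Chain' G.Adj ((a :: D) ++ [a]) := by
      rw [List.cons_append, hDT]; exact hchainc
    obtain ⟨-, -, h3⟩ := List.isChain_append.mp h2
    have := h3 ((a :: D).getLast (List.cons_ne_nil _ _))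
      (List.getLast?_eq_getLast (List.cons_ne_nil _ _)) a rfl
    rwa [List.getLast_cons hDne] at this
  -- set up indices
  refine ⟨P1.length + (c.length - 1), P1.length, by omega, by omega, by omega, ?_⟩
  have hm : L.length = (P1.length + (c.length - 1)) + 1 := by omega
  refine ⟨fun i => L.get (Fin.cast hm.symm i), ?_, ?_, ?_, ?_⟩
  · exact (List.nodup_iff_injective_get.mp hLnd).comp (Fin.cast_injective _)
  · have hv0 : (P1.support ++ D)[0]'(by simp only [List.length_append]; omega) = v0 := by
      rw [List.getElem_append_left (by omega)]
      obtain ⟨t, ht⟩ : ∃ t, P1.support = v0 :: t := ⟨_, SimpleGraph.Walk.support_eq_cons P1⟩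
      simp [ht]
    exact hv0
  · intro i
    exact List.isChain_iff_getElem.mp hchainL i.val (by have := i.isLt; omega)
  · have hlast : (P1.support ++ D)[P1.length + (c.length - 1)]'(by
        simp only [List.length_append]; omega) = D.getLast hDne := by
      rw [List.getElem_append_right (by omega)]
      rw [List.getLast_eq_getElem]
      congr 1
      omega
    have hja : (P1.support ++ D)[P1.length]'(by simp only [List.length_append]; omega) = a := by
      rw [List.getElem_append_left (by omega)]
      rw [List.getLast_eq_getElem] at hP1last
      convert hP1last using 2
      omega
    have hgoal : G.Adj ((P1.support ++ D)[P1.length + (c.length - 1)]'(by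
          simp only [List.length_append]; omega))
        ((P1.support ++ D)[P1.length]'(by simp only [List.length_append]; omega)) := by
      rw [hlast, hja]; exact hchord
    exact hgoal


lemma erMeasure_all_true (n : ℕ) (p : ENNReal) (hp : p ≤ 1)
    (S : Finset {e : Sym2 (Fin n) // ¬ e.IsDiag}) :
    erMeasure n p hp {f | ∀ e ∈ S, f e = true} = p ^ S.card := by
  classical
  have hset : {f : {e : Sym2 (Fin n) // ¬ e.IsDiag} → Bool | ∀ e ∈ S, f e = true}
      = Set.pi Set.univ (fun e => if e ∈ S then ({true} : Set Bool) else Set.univ) := by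
    ext f
    simp only [Set.mem_setOf_eq, Set.mem_pi, Set.mem_univ, forall_true_left]
    constructor
    · intro h e
      by_cases he : e ∈ S <;> simp [he, h]
    · intro h e he
      have := h e
      simpa [he] using this
  rw [erMeasure, hset, Measure.pi_pi]
  calc ∏ e : {e : Sym2 (Fin n) // ¬ e.IsDiag},
      (PMF.bernoulli p.toNNReal
        (by simpa using ENNReal.toNNReal_mono ENNReal.one_ne_top hp)).toMeasure (if e ∈ S then ({true} : Set Bool) else Set.univ)
      = ∏ e : {e : Sym2 (Fin n) // ¬ e.IsDiag}, (if e ∈ S then p else 1) := by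
        apply Finset.prod_congr rfl
        intro e _
        by_cases he : e ∈ S
        · simp only [he, if_true]
          rw [PMF.toMeasure_apply_singleton _ _ (measurableSet_singleton _)]
          exact (PMF.bernoulli_apply _ true).trans (ENNReal.coe_toNNReal (ne_top_of_le_ne_top ENNReal.one_ne_top hp))
        · simp only [he, if_false]
          exact measure_univ
    _ = p ^ S.card := by
        rw [Finset.prod_ite_mem, Finset.univ_inter, Finset.prod_const]

lemma measure_bad_le (N : ℕ) (p : ENNReal) (hp : p ≤ 1)
    (m : ℕ) (j : Fin (m+1)) (z : Fin (m+1) → Fin N) :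
    erMeasure N p hp {f | Function.Injective z ∧
      (j : ℕ) + 2 ≤ m ∧
      (∀ i : Fin m, (graphOf N f).Adj (z i.castSucc) (z i.succ)) ∧
      (graphOf N f).Adj (z (Fin.last m)) (z j)} ≤ p ^ (m+1) := by
  classical
  by_cases hOK : Function.Injective z ∧ (j : ℕ) + 2 ≤ m
  swap
  · have : {f | Function.Injective z ∧ (j : ℕ) + 2 ≤ m ∧
        (∀ i : Fin m, (graphOf N f).Adj (z i.castSucc) (z i.succ)) ∧
        (graphOf N f).Adj (z (Fin.last m)) (z j)} = ∅ := by
      ext f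
      simp only [Set.mem_setOf_eq, Set.mem_empty_iff_false, iff_false]
      rintro ⟨h1, h2, -⟩
      exact hOK ⟨h1, h2⟩
    rw [this]
    simp
  obtain ⟨hinj, hjm⟩ := hOK
  have hne : ∀ a b : Fin (m+1), a ≠ b → z a ≠ z b := fun a b hab h => hab (hinj h)
  -- the edges
  set ε : Fin (m+1) → {e : Sym2 (Fin N) // ¬ e.IsDiag} := fun i =>
    if h : (i : ℕ) < m then
      ⟨s(z ⟨i, by omega⟩, z ⟨(i : ℕ) + 1, by omega⟩),
        fun hd => hne _ _ (by simp [Fin.ext_iff]) (Sym2.mk_isDiag_iff.mp hd)⟩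
    else
      ⟨s(z (Fin.last m), z j),
        fun hd => hne _ _ (by simp [Fin.ext_iff, Fin.last]; omega) (Sym2.mk_isDiag_iff.mp hd)⟩
    with hε
  have hεinj : Function.Injective ε := by
    have hεval : ∀ i : Fin (m+1), (ε i : Sym2 (Fin N)) =
        if h : (i : ℕ) < m then s(z ⟨(i : ℕ), by omega⟩, z ⟨(i : ℕ) + 1, by omega⟩)
        else s(z (Fin.last m), z j) := by
      intro i
      rw [hε]
      by_cases h : (i : ℕ) < m
      · simp only [dif_pos h]
      · simp only [dif_neg h]
    intro i k hik
    have h2 := congrArg Subtype.val hik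
    rw [hεval i, hεval k] at h2
    have hjv : (j : ℕ) < m + 1 := j.isLt
    have hiv : (i : ℕ) < m + 1 := i.isLt
    have hkv : (k : ℕ) < m + 1 := k.isLt
    by_cases hi : (i : ℕ) < m <;> by_cases hk : (k : ℕ) < m
    · rw [dif_pos hi, dif_pos hk, Sym2.eq_iff] at h2
      rcases h2 with ⟨h1, h2'⟩ | ⟨h1, h2'⟩
      · have e1 := hinj h1
        simp only [Fin.ext_iff] at e1 ⊢
        exact e1
      · have e1 := hinj h1
        have e2 := hinj h2'
        simp only [Fin.ext_iff] at e1 e2 ⊢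
        omega
    · rw [dif_pos hi, dif_neg hk, Sym2.eq_iff] at h2
      rcases h2 with ⟨h1, h2'⟩ | ⟨h1, h2'⟩ <;>
      · have e1 := hinj h1
        have e2 := hinj h2'
        simp only [Fin.ext_iff, Fin.val_last] at e1 e2 ⊢
        omega
    · rw [dif_neg hi, dif_pos hk, Sym2.eq_iff] at h2
      rcases h2 with ⟨h1, h2'⟩ | ⟨h1, h2'⟩ <;>
      · have e1 := hinj h1
        have e2 := hinj h2'
        simp only [Fin.ext_iff, Fin.val_last] at e1 e2 ⊢
        omega
    · simp only [Fin.ext_iff]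
      omega
  have hsub : {f | Function.Injective z ∧ (j : ℕ) + 2 ≤ m ∧
        (∀ i : Fin m, (graphOf N f).Adj (z i.castSucc) (z i.succ)) ∧
        (graphOf N f).Adj (z (Fin.last m)) (z j)} ⊆
      {f | ∀ e ∈ Finset.image ε Finset.univ, f e = true} := by
    rintro f ⟨-, -, hadj, hchord⟩ e he
    simp only [Finset.mem_image, Finset.mem_univ, true_and] at he
    obtain ⟨i, rfl⟩ := he
    by_cases h : (i : ℕ) < m
    · obtain ⟨hne', hf⟩ := hadj ⟨(i : ℕ), h⟩
      have hεi : ε i = ⟨s(z ⟨(i : ℕ), by omega⟩, z ⟨(i : ℕ) + 1, by omega⟩),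
          fun hd => hne _ _ (by simp [Fin.ext_iff]) (Sym2.mk_isDiag_iff.mp hd)⟩ := by
        rw [hε]
        exact dif_pos h
      rw [hεi]
      exact hf
    · obtain ⟨hne', hf⟩ := hchord
      have hεi : ε i = ⟨s(z (Fin.last m), z j),
          fun hd => hne _ _ (by simp [Fin.ext_iff, Fin.last]; omega)
            (Sym2.mk_isDiag_iff.mp hd)⟩ := by
        rw [hε]
        exact dif_neg h
      rw [hεi]
      exact hf
  calc erMeasure N p hp _ ≤ erMeasure N p hp {f | ∀ e ∈ Finset.image ε Finset.univ, f e = true} :=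
        measure_mono hsub
    _ = p ^ (Finset.image ε Finset.univ).card := erMeasure_all_true _ _ _ _
    _ = p ^ (m + 1) := by rw [Finset.card_image_of_injective _ hεinj, Finset.card_univ,
        Fintype.card_fin]

lemma measure_badSet_le (N : ℕ) (p : ENNReal) (hp : p ≤ 1)
    (m : ℕ) (j : Fin (m+1)) (z : Fin (m+1) → Fin N) :
    erMeasure N p hp (badSet N m j z) ≤ p ^ (m+1) :=
  measure_bad_le N p hp m j z


end aux

/-- Fix c > 0 and r ≥ 3. In G(n, c/n) (indexed here as n + 1 so that the
vertex 0 exists), the probability that there exists a vertex w lying on a cycle of length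
at most r that is reachable from vertex 0 by a walk of length at most r tends to 0. -/
theorem erdosRenyi_fixed_vertex_near_short_cycle_tendsto_zero
    (c : ℝ) (hc : 0 < c) (r : ℕ) (hr : 3 ≤ r) :
    Tendsto (fun n : ℕ =>
      erMeasure (n + 1) (min 1 (ENNReal.ofReal (c / (n + 1)))) (min_le_left _ _)
        {f | ∃ w : Fin (n + 1),
          (∃ (x : Fin (n + 1)) (p : (graphOf (n + 1) f).Walk x x),
            p.IsCycle ∧ p.length ≤ r ∧ w ∈ p.support) ∧
          ∃ q : (graphOf (n + 1) f).Walk 0 w, q.length ≤ r})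
      atTop (nhds 0) := by
  classical
  set K : ℝ := ∑ m ∈ Finset.Icc 2 (2*r), ((m : ℝ) + 1) * c ^ (m+1) with hK
  have hbound : ∀ n : ℕ,
      erMeasure (n + 1) (min 1 (ENNReal.ofReal (c / (n + 1)))) (min_le_left _ _)
        {f | ∃ w : Fin (n + 1),
          (∃ (x : Fin (n + 1)) (p : (graphOf (n + 1) f).Walk x x),
            p.IsCycle ∧ p.length ≤ r ∧ w ∈ p.support) ∧
          ∃ q : (graphOf (n + 1) f).Walk 0 w, q.length ≤ r}
      ≤ ENNReal.ofReal (K / (n + 1)) := by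
    intro n
    set pp : ENNReal := min 1 (ENNReal.ofReal (c / (n + 1))) with hpp
    have hpl : pp ≤ 1 := min_le_left _ _
    -- inclusion in the union of bad sets
    have hincl : {f : {e : Sym2 (Fin (n+1)) // ¬ e.IsDiag} → Bool | ∃ w : Fin (n + 1),
          (∃ (x : Fin (n + 1)) (p : (graphOf (n + 1) f).Walk x x),
            p.IsCycle ∧ p.length ≤ r ∧ w ∈ p.support) ∧
          ∃ q : (graphOf (n + 1) f).Walk 0 w, q.length ≤ r} ⊆
        ⋃ m ∈ Finset.Icc 2 (2*r),
          ⋃ jg : Fin (m+1) × (Fin m → Fin (n+1)),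
            badSet (n+1) m jg.1 (Fin.cons 0 jg.2) := by
      rintro f ⟨w, ⟨x, p, hcyc, hplen, hwsup⟩, q, hql⟩
      obtain ⟨m, j, hm2, hmr, hj, z, hinj, hz0, hadj, hchord⟩ :=
        extract_structure (G := graphOf (n+1) f) 0 w x r p hcyc hplen hwsup q hql
      have hzz : (Fin.cons (0 : Fin (n+1)) (z ∘ Fin.succ) : Fin (m+1) → Fin (n+1)) = z := by
        rw [show (z ∘ Fin.succ : Fin m → Fin (n+1)) = Fin.tail z from rfl, ← hz0]
        exact Fin.cons_self_tail z
      refine Set.mem_biUnion (Finset.mem_Icc.mpr ⟨hm2, hmr⟩) ?_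
      refine Set.mem_iUnion.mpr ⟨(⟨j, by omega⟩, z ∘ Fin.succ), ?_⟩
      rw [badSet]
      simp only [Set.mem_setOf_eq, hzz]
      exact ⟨hinj, hj, hadj, hchord⟩
    refine le_trans (measure_mono hincl) ?_
    refine le_trans (measure_biUnion_finset_le _ _) ?_
    have hterm : ∀ m ∈ Finset.Icc 2 (2*r),
        erMeasure (n+1) pp hpl (⋃ jg : Fin (m+1) × (Fin m → Fin (n+1)),
            badSet (n+1) m jg.1 (Fin.cons 0 jg.2))
        ≤ ENNReal.ofReal (((m : ℝ) + 1) * c ^ (m+1) / (n+1)) := by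
      intro m _
      refine le_trans (measure_iUnion_fintype_le _ _) ?_
      have h1 : ∀ jg : Fin (m+1) × (Fin m → Fin (n+1)),
          erMeasure (n+1) pp hpl (badSet (n+1) m jg.1 (Fin.cons 0 jg.2)) ≤ pp ^ (m+1) :=
        fun jg => measure_badSet_le (n+1) pp hpl m jg.1 _
      refine le_trans (Finset.sum_le_sum (fun jg _ => h1 jg)) ?_
      rw [Finset.sum_const, Finset.card_univ, Fintype.card_prod, Fintype.card_fun,
        Fintype.card_fin, Fintype.card_fin, Fintype.card_fin, nsmul_eq_mul]
      have hple : pp ≤ ENNReal.ofReal (c / (n+1)) := min_le_right _ _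
      have h2 : pp ^ (m+1) ≤ ENNReal.ofReal (c / (n+1)) ^ (m+1) := pow_le_pow_left' hple _
      refine le_trans (mul_le_mul_right h2 _) ?_
      have hc0 : (0:ℝ) ≤ c / (n+1) := by positivity
      rw [← ENNReal.ofReal_pow hc0, ← ENNReal.ofReal_natCast, ← ENNReal.ofReal_mul (by positivity)]
      apply ENNReal.ofReal_le_ofReal
      have hne : ((n:ℝ) + 1) ≠ 0 := by positivity
      refine le_of_eq ?_
      push_cast
      rw [div_pow, pow_succ ((n:ℝ)+1) m]
      field_simp
    refine le_trans (Finset.sum_le_sum hterm) ?_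
    rw [← ENNReal.ofReal_sum_of_nonneg (fun m _ => by positivity)]
    apply ENNReal.ofReal_le_ofReal
    rw [hK, Finset.sum_div]
  -- limit
  have hlim : Tendsto (fun n : ℕ => ENNReal.ofReal (K / (n + 1))) atTop (nhds 0) := by
    have h1 : Tendsto (fun n : ℕ => K / (n + 1)) atTop (nhds 0) := by
      have := tendsto_one_div_add_atTop_nhds_zero_nat.const_mul K
      rw [mul_zero] at this
      simpa [div_eq_mul_inv] using this
    have := (ENNReal.continuous_ofReal.tendsto 0).comp h1
    simpa using (show Tendsto (fun n : ℕ => ENNReal.ofReal (K / (n + 1))) atTop (nhds (ENNReal.ofReal 0)) from this)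
  exact tendsto_of_tendsto_of_tendsto_of_le_of_le tendsto_const_nhds hlim
    (fun n => zero_le) hbound
end

section
/- Fix an integer k ≥ 1, constants p ∈ (0, 1) and ε > 0, and a subset S ⊆ Fin k. Asymptotically almost surely, the Erdős–Rényi random graph G(n, p) satisfies: for every injective tuple (u_1, ..., u_k) of vertices, the number N of vertices v outside {u_1, ..., u_k} such that v is adjacent to u_i exactly for those i ∈ S (i.e. v is adjacent to u_i if and only if i ∈ S) satisfies |N − p^{|S|}·(1−p)^{k−|S|}·n| < ε·n. -/
set_option maxHeartbeats 1000000

open MeasureTheory Filter Finset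
open scoped Classical

abbrev EdgeT (n : ℕ) := {e : Sym2 (Fin n) // ¬ e.IsDiag}

/-- real weight of a boolean -/
def wB (p : ℝ) : Bool → ℝ := fun b => bif b then p else 1 - p

lemma wB_nonneg {p : ℝ} (h0 : 0 ≤ p) (h1 : p ≤ 1) (b : Bool) : 0 ≤ wB p b := by
  cases b <;> simp [wB] <;> linarith

/-- factorization of sums of products over the boolean cube -/
lemma weight_sum_eq {n : ℕ} (Φ : EdgeT n → Bool → ℝ) :
    ∑ f : EdgeT n → Bool, ∏ e, Φ e (f e) = ∏ e, (Φ e true + Φ e false) := by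
  classical
  rw [← Fintype.prod_sum Φ]
  exact Finset.prod_congr rfl fun e _ => Fintype.sum_bool _

section Core

variable {n k : ℕ} (p : ℝ) (S : Finset (Fin k)) (u : Fin k → Fin n)

/-- the target bit pattern -/
def bS (i : Fin k) : Bool := if i ∈ S then true else false

/-- extension of an edge-indexed boolean function to all of `Sym2` -/
def Fx (f : EdgeT n → Bool) : Sym2 (Fin n) → Bool :=
  fun c => if h : ¬ c.IsDiag then f ⟨c, h⟩ else true

/-- indicator that `v` (outside the range of `u`) realizes the pattern `S` -/
def chi (v : Fin n) (f : EdgeT n → Bool) : ℝ :=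
  ∏ i : Fin k, if _ : v = u i then 0
    else (if Fx f s(v, u i) = bS S i then 1 else 0)

lemma Fx_mk {n : ℕ} (f : EdgeT n → Bool) {v w : Fin n} (h : v ≠ w) :
    Fx f s(v, w) = f ⟨s(v, w), fun hd => h (Sym2.mk_isDiag_iff.mp hd)⟩ :=
  dif_pos _

lemma chi_eq_of_ne {v : Fin n} (hv : ∀ i, v ≠ u i) (f : EdgeT n → Bool) :
    chi S u v f = ∏ i : Fin k, (if Fx f s(v, u i) = bS S i then 1 else 0) := by
  unfold chi
  exact Finset.prod_congr rfl fun i _ => dif_neg (hv i)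

lemma chi_eq_zero {v : Fin n} (i : Fin k) (hv : v = u i) (f : EdgeT n → Bool) :
    chi S u v f = 0 :=
  Finset.prod_eq_zero (Finset.mem_univ i) (dif_pos hv)

lemma chi_mem {v : Fin n} (f : EdgeT n → Bool) :
    chi S u v f = 0 ∨ chi S u v f = 1 := by
  classical
  unfold chi
  by_cases h : ∀ i : Fin k, (if _ : v = u i then (0:ℝ)
      else (if Fx f s(v, u i) = bS S i then 1 else 0)) = 1
  · right; rw [Finset.prod_congr rfl (fun i _ => h i)]; simp
  · push_neg at h
    obtain ⟨i, hi⟩ := h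
    left
    refine Finset.prod_eq_zero (Finset.mem_univ i) ?_
    by_cases h1 : v = u i
    · exact dif_pos h1
    · rw [dif_neg h1]
      rw [dif_neg h1] at hi
      by_cases h2 : Fx f s(v, u i) = bS S i
      · exact absurd (if_pos h2) hi
      · exact if_neg h2

lemma chi_nonneg {v : Fin n} (f : EdgeT n → Bool) : 0 ≤ chi S u v f := by
  rcases chi_mem S u (v := v) f with h | h <;> rw [h] <;> norm_num

/-- the count in the theorem statement equals the sum of the indicators -/
lemma ncard_eq_sum_chi (f : EdgeT n → Bool) :
    ({v : Fin n | (∀ i : Fin k, v ≠ u i) ∧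
        (∀ i : Fin k, (∃ h : v ≠ u i,
          f ⟨s(v, u i), fun hd => h (Sym2.mk_isDiag_iff.mp hd)⟩ = true) ↔ i ∈ S)}.ncard : ℝ)
      = ∑ v : Fin n, chi S u v f := by
  classical
  have hset : {v : Fin n | (∀ i : Fin k, v ≠ u i) ∧
        (∀ i : Fin k, (∃ h : v ≠ u i,
          f ⟨s(v, u i), fun hd => h (Sym2.mk_isDiag_iff.mp hd)⟩ = true) ↔ i ∈ S)}
      = ↑(Finset.univ.filter (fun v : Fin n => (∀ i : Fin k, v ≠ u i) ∧
        (∀ i : Fin k, (∃ h : v ≠ u i,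
          f ⟨s(v, u i), fun hd => h (Sym2.mk_isDiag_iff.mp hd)⟩ = true) ↔ i ∈ S))) := by
    ext v; simp
  rw [hset, Set.ncard_coe_finset, Finset.card_filter]
  push_cast
  refine Finset.sum_congr rfl fun v _ => ?_
  by_cases hv : ∀ i : Fin k, v ≠ u i
  · rw [chi_eq_of_ne S u hv f]
    by_cases hpat : ∀ i : Fin k, Fx f s(v, u i) = bS S i
    · rw [if_pos, Finset.prod_congr rfl (fun i _ => if_pos (hpat i))]
      · simp
      · refine ⟨hv, fun i => ?_⟩
        constructor
        · rintro ⟨h, hf⟩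
          have : Fx f s(v, u i) = true := by
            rw [Fx_mk f (hv i)]; exact hf
          rw [hpat i] at this
          by_contra hiS
          simp [bS, hiS] at this
        · intro hiS
          refine ⟨hv i, ?_⟩
          have := hpat i
          rw [Fx_mk f (hv i)] at this
          rw [this, bS, if_pos hiS]
    · push_neg at hpat
      obtain ⟨i, hi⟩ := hpat
      rw [if_neg ?_]
      · exact (Finset.prod_eq_zero (Finset.mem_univ i)
          (if_neg hi : (if Fx f s(v, u i) = bS S i then (1:ℝ) else 0) = 0)).symm
      rintro ⟨-, hpat2⟩
      have h2 := hpat2 i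
      apply hi
      rw [Fx_mk f (hv i)]
      by_cases hiS : i ∈ S
      · have ⟨h, hf⟩ := h2.mpr hiS
        rw [bS, if_pos hiS]
        exact hf
      · rw [bS, if_neg hiS]
        rw [Bool.eq_false_iff]
        intro htrue
        exact hiS (h2.mp ⟨hv i, htrue⟩)
  · push_neg at hv
    obtain ⟨i, hi⟩ := hv
    rw [chi_eq_zero S u i hi f, if_neg]
    rintro ⟨hv2, -⟩
    exact hv2 i hi

lemma Fx_val {n : ℕ} (f : EdgeT n → Bool) (e : EdgeT n) : Fx f e.val = f e := by
  rw [Fx, dif_pos e.prop]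

lemma er_inner_sum (h0 : 0 ≤ p) (h1 : p ≤ 1) (hu : Function.Injective u)
    {T : Finset (Fin n)} (hT : ∀ v ∈ T, ∀ i, v ≠ u i) :
    ∑ f : EdgeT n → Bool, (∏ e, wB p (f e)) * ∏ v ∈ T, chi S u v f
      = (∏ i : Fin k, wB p (bS S i)) ^ T.card := by
  classical
  set g : Fin n × Fin k → Sym2 (Fin n) := fun vi => s(vi.1, u vi.2) with hg
  set Tk : Finset (Fin n × Fin k) := T ×ˢ (univ : Finset (Fin k)) with hTk
  have hginj : ∀ vi ∈ Tk, ∀ vi' ∈ Tk, g vi = g vi' → vi = vi' := by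
    rintro ⟨v, i⟩ hvi ⟨v', i'⟩ hvi' hgeq
    rw [hTk, Finset.mem_product] at hvi hvi'
    simp only [hg] at hgeq
    rcases Sym2.eq_iff.mp hgeq with ⟨h1, h2⟩ | ⟨h1, h2⟩
    · exact Prod.ext h1 (hu h2)
    · exact absurd h1 (hT v hvi.1 i')
  have hgdiag : ∀ vi ∈ Tk, ¬ (g vi).IsDiag := by
    rintro ⟨v, i⟩ hvi hd
    rw [hTk, Finset.mem_product] at hvi
    exact hT v hvi.1 i (Sym2.mk_isDiag_iff.mp hd)
  set ρ : Sym2 (Fin n) → Bool → ℝ :=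
    fun c x => ∏ vi ∈ Tk.filter (fun vi => g vi = c), (if x = bS S vi.2 then (1:ℝ) else 0)
    with hρ
  -- step (a): pointwise product formula
  have hA : ∀ f : EdgeT n → Bool,
      ∏ v ∈ T, chi S u v f = ∏ e : EdgeT n, ρ e.val (f e) := by
    intro f
    have e1 : ∏ v ∈ T, chi S u v f
        = ∏ vi ∈ Tk, (if Fx f (g vi) = bS S vi.2 then (1:ℝ) else 0) := by
      rw [hTk]
      refine Eq.trans ?_ (Finset.prod_product' T univ
        (fun v i => if Fx f s(v, u i) = bS S i then (1:ℝ) else 0)).symm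
      exact Finset.prod_congr rfl fun v hv => chi_eq_of_ne S u (hT v hv) f
    have e2 : ∏ vi ∈ Tk, (if Fx f (g vi) = bS S vi.2 then (1:ℝ) else 0)
        = ∏ c : Sym2 (Fin n), ρ c (Fx f c) := by
      rw [← Finset.prod_fiberwise_of_maps_to (g := g) (fun vi _ => Finset.mem_univ (g vi))
        (fun vi => (if Fx f (g vi) = bS S vi.2 then (1:ℝ) else 0))]
      refine Finset.prod_congr rfl fun c _ => ?_
      refine Finset.prod_congr rfl fun vi hvi => ?_
      rw [Finset.mem_filter] at hvi
      rw [hvi.2]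
    have e3 : ∏ c : Sym2 (Fin n), ρ c (Fx f c)
        = ∏ c ∈ Finset.univ.filter (fun c : Sym2 (Fin n) => ¬ c.IsDiag), ρ c (Fx f c) := by
      symm
      refine Finset.prod_subset (Finset.filter_subset _ _) ?_
      intro c _ hc
      rw [Finset.mem_filter, not_and, not_not] at hc
      have hcd := hc (Finset.mem_univ c)
      have : Tk.filter (fun vi => g vi = c) = ∅ := by
        rw [Finset.filter_eq_empty_iff]
        intro vi hvi hgc
        exact hgdiag vi hvi (hgc ▸ hcd)
      rw [hρ]
      simp only [this, Finset.prod_empty]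
    have e4 : ∏ c ∈ Finset.univ.filter (fun c : Sym2 (Fin n) => ¬ c.IsDiag), ρ c (Fx f c)
        = ∏ e : EdgeT n, ρ e.val (f e) := by
      rw [Finset.prod_subtype (p := fun c : Sym2 (Fin n) => ¬ c.IsDiag) _
        (by intro c; simp) (fun c => ρ c (Fx f c))]
      exact Finset.prod_congr rfl fun e _ => by rw [Fx_val]
    rw [e1, e2, e3, e4]
  -- combine with weights and factorize
  have hB : ∑ f : EdgeT n → Bool, (∏ e, wB p (f e)) * ∏ v ∈ T, chi S u v f
      = ∏ e : EdgeT n, (wB p true * ρ e.val true + wB p false * ρ e.val false) := by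
    rw [← weight_sum_eq (fun e x => wB p x * ρ e.val x)]
    refine Finset.sum_congr rfl fun f _ => ?_
    rw [hA f, ← Finset.prod_mul_distrib]
  rw [hB]
  -- per-edge evaluation
  have hC : ∀ e : EdgeT n,
      wB p true * ρ e.val true + wB p false * ρ e.val false
        = ∏ vi ∈ Tk.filter (fun vi => g vi = e.val), wB p (bS S vi.2) := by
    intro e
    have hcard : (Tk.filter (fun vi => g vi = e.val)).card ≤ 1 := by
      refine Finset.card_le_one.mpr ?_
      intro a ha b hb
      rw [Finset.mem_filter] at ha hb
      exact hginj a ha.1 b hb.1 (ha.2.trans hb.2.symm)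
    rcases Nat.le_one_iff_eq_zero_or_eq_one.mp hcard with hc | hc
    · rw [Finset.card_eq_zero] at hc
      rw [hρ]
      simp only [hc, Finset.prod_empty]
      simp [wB]
    · rw [Finset.card_eq_one] at hc
      obtain ⟨a, ha⟩ := hc
      rw [hρ]
      simp only [ha, Finset.prod_singleton]
      cases hb : bS S a.2 <;> simp [wB, hb]
  rw [Finset.prod_congr rfl (fun e _ => hC e)]
  -- regroup fiberwise back
  have hD : ∏ e : EdgeT n, ∏ vi ∈ Tk.filter (fun vi => g vi = e.val), wB p (bS S vi.2)
      = ∏ vi ∈ Tk, wB p (bS S vi.2) := by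
    rw [← Finset.prod_fiberwise_of_maps_to (g := g) (fun vi _ => Finset.mem_univ (g vi))
      (fun vi => wB p (bS S vi.2))]
    rw [← Finset.prod_subtype (p := fun c : Sym2 (Fin n) => ¬ c.IsDiag)
      (Finset.univ.filter (fun c : Sym2 (Fin n) => ¬ c.IsDiag)) (by intro c; simp)
      (fun c => ∏ vi ∈ Tk.filter (fun vi => g vi = c), wB p (bS S vi.2))]
    refine Finset.prod_subset (Finset.filter_subset _ _) ?_
    intro c _ hc
    rw [Finset.mem_filter, not_and, not_not] at hc
    have hcd := hc (Finset.mem_univ c)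
    have : Tk.filter (fun vi => g vi = c) = ∅ := by
      rw [Finset.filter_eq_empty_iff]
      intro vi hvi hgc
      exact hgdiag vi hvi (hgc ▸ hcd)
    simp only [this, Finset.prod_empty]
  rw [hD, hTk]
  rw [Finset.prod_product' T univ (fun _ i => wB p (bS S i))]
  rw [Finset.prod_const]

lemma qv_eq : ∏ i : Fin k, wB p (bS S i) = p ^ S.card * (1 - p) ^ (k - S.card) := by
  classical
  have h : ∀ i : Fin k, wB p (bS S i) = if i ∈ S then p else 1 - p := by
    intro i; by_cases h : i ∈ S <;> simp [wB, bS, h]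
  rw [Finset.prod_congr rfl (fun i _ => h i), Finset.prod_ite, Finset.prod_const,
    Finset.prod_const]
  congr 2
  · simp
  · have : Finset.univ.filter (fun i : Fin k => ¬ i ∈ S) = Sᶜ := by
      ext i; simp
    rw [this, Finset.card_compl, Fintype.card_fin]

lemma Z_eq (h0 : 0 ≤ p) (h1 : p ≤ 1) (hu : Function.Injective u) (t : ℝ) :
    ∑ f : EdgeT n → Bool, (∏ e, wB p (f e)) * Real.exp (t * ∑ v : Fin n, chi S u v f)
      = ((Real.exp t - 1) * ∏ i : Fin k, wB p (bS S i) + 1) ^ (n - k) := by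
  classical
  set c := Real.exp t - 1 with hc
  set q := ∏ i : Fin k, wB p (bS S i) with hq
  set V0 : Finset (Fin n) := univ \ Finset.image u univ with hV0
  have hV0mem : ∀ v ∈ V0, ∀ i, v ≠ u i := by
    intro v hv i heq
    rw [hV0, Finset.mem_sdiff] at hv
    exact hv.2 (Finset.mem_image.mpr ⟨i, Finset.mem_univ i, heq.symm⟩)
  have hV0card : V0.card = n - k := by
    rw [hV0, Finset.card_sdiff_of_subset (Finset.subset_univ _), Finset.card_univ, Fintype.card_fin,
      Finset.card_image_of_injective _ hu, Finset.card_univ, Fintype.card_fin]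
  have hsum : ∀ f : EdgeT n → Bool, ∑ v : Fin n, chi S u v f = ∑ v ∈ V0, chi S u v f := by
    intro f
    symm
    refine Finset.sum_subset (Finset.subset_univ _) ?_
    intro v _ hv
    rw [hV0, Finset.mem_sdiff, not_and, not_not] at hv
    obtain ⟨i, _, hi⟩ := Finset.mem_image.mp (hv (Finset.mem_univ v))
    exact chi_eq_zero S u i hi.symm f
  have hexp : ∀ f : EdgeT n → Bool, Real.exp (t * ∑ v ∈ V0, chi S u v f)
      = ∏ v ∈ V0, (c * chi S u v f + 1) := by
    intro f
    rw [Finset.mul_sum, Real.exp_sum]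
    refine Finset.prod_congr rfl fun v _ => ?_
    rcases chi_mem S u (v := v) f with h | h <;> rw [h] <;> simp [hc]
  have step1 : ∑ f : EdgeT n → Bool, (∏ e, wB p (f e)) * Real.exp (t * ∑ v : Fin n, chi S u v f)
      = ∑ f : EdgeT n → Bool, ∑ T ∈ V0.powerset,
          c ^ T.card * ((∏ e, wB p (f e)) * ∏ v ∈ T, chi S u v f) := by
    refine Finset.sum_congr rfl fun f _ => ?_
    rw [hsum f, hexp f, Finset.prod_add, Finset.mul_sum]
    refine Finset.sum_congr rfl fun T _ => ?_
    rw [Finset.prod_const, Finset.prod_mul_distrib, Finset.prod_const]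
    ring
  rw [step1, Finset.sum_comm]
  have step2 : ∀ T ∈ V0.powerset,
      ∑ f : EdgeT n → Bool, c ^ T.card * ((∏ e, wB p (f e)) * ∏ v ∈ T, chi S u v f)
        = (c * q) ^ T.card := by
    intro T hT
    rw [← Finset.mul_sum,
      er_inner_sum p S u h0 h1 hu (fun v hv => hV0mem v (Finset.mem_powerset.mp hT hv)),
      ← hq, mul_pow]
  rw [Finset.sum_congr rfl step2]
  have step3 : ∑ T ∈ V0.powerset, (c * q) ^ T.card
      = ∏ v ∈ V0, (c * q + 1) := by
    rw [Finset.prod_add]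
    refine Finset.sum_congr rfl fun T _ => ?_
    rw [Finset.prod_const, Finset.prod_const, one_pow, mul_one]
  rw [step3, Finset.prod_const, hV0card]

end Core

lemma erMeasure_singleton {n : ℕ} {p : ℝ} (h0 : 0 ≤ p) (hp : ENNReal.ofReal p ≤ 1)
    (f : EdgeT n → Bool) :
    erMeasure n (ENNReal.ofReal p) hp {f} = ENNReal.ofReal (∏ e, wB p (f e)) := by
  classical
  have h1 : p ≤ 1 := ENNReal.ofReal_le_one.mp hp
  have hsingle : ({f} : Set (EdgeT n → Bool)) = Set.pi Set.univ (fun e => {f e}) := by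
    ext g
    simp [funext_iff, eq_comm]
  rw [hsingle, erMeasure, Measure.pi_pi]
  rw [ENNReal.ofReal_prod_of_nonneg (fun (e : EdgeT n) _ => wB_nonneg h0 h1 (f e))]
  refine Finset.prod_congr rfl fun e _ => ?_
  rw [PMF.toMeasure_apply_singleton _ _ (measurableSet_singleton _)]
  erw [PMF.bernoulli_apply]
  cases hb : f e <;> simp [wB, ENNReal.ofReal_sub, h0]

lemma erMeasure_set {n : ℕ} {p : ℝ} (h0 : 0 ≤ p) (hp : ENNReal.ofReal p ≤ 1)
    (s : Set (EdgeT n → Bool)) :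
    erMeasure n (ENNReal.ofReal p) hp s
      = ENNReal.ofReal (∑ f ∈ Finset.univ.filter (· ∈ s), ∏ e, wB p (f e)) := by
  classical
  have h1 : p ≤ 1 := ENNReal.ofReal_le_one.mp hp
  have hs : s = ⋃ f ∈ Finset.univ.filter (· ∈ s), ({f} : Set (EdgeT n → Bool)) := by
    ext g; simp
  have hd : (↑(Finset.univ.filter (· ∈ s)) : Set (EdgeT n → Bool)).PairwiseDisjoint
      (fun f => ({f} : Set (EdgeT n → Bool))) := by
    intro a _ b _ hab
    simp only [Function.onFun, Set.disjoint_singleton]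
    exact hab
  calc erMeasure n (ENNReal.ofReal p) hp s
      = erMeasure n (ENNReal.ofReal p) hp
          (⋃ f ∈ Finset.univ.filter (· ∈ s), ({f} : Set (EdgeT n → Bool))) := by rw [← hs]
    _ = ∑ f ∈ Finset.univ.filter (· ∈ s), erMeasure n (ENNReal.ofReal p) hp {f} :=
        measure_biUnion_finset hd (fun f _ => measurableSet_singleton f)
    _ = ENNReal.ofReal (∑ f ∈ Finset.univ.filter (· ∈ s), ∏ e, wB p (f e)) := by
        rw [ENNReal.ofReal_sum_of_nonneg
          (fun f _ => Finset.prod_nonneg fun e _ => wB_nonneg h0 h1 (f e))]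
        exact Finset.sum_congr rfl fun f _ => erMeasure_singleton h0 hp f

lemma total_mass {n : ℕ} {p : ℝ} (h1 : p ≤ 1) :
    ∑ f : EdgeT n → Bool, ∏ e, wB p (f e) = 1 := by
  rw [weight_sum_eq (fun _ x => wB p x)]
  have : ∀ e : EdgeT n, wB p true + wB p false = 1 := by intro e; simp [wB]
  rw [Finset.prod_congr rfl fun e _ => this e, Finset.prod_const, one_pow]

/-- Markov/Chernoff bound, upper tail -/
lemma markov_ge {α : Type*} [Fintype α] (W N : α → ℝ) (hW : ∀ x, 0 ≤ W x)
    {t : ℝ} (ht : 0 ≤ t) (a : ℝ) :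
    ∑ x ∈ Finset.univ.filter (fun x => a ≤ N x), W x
      ≤ Real.exp (-(t * a)) * ∑ x, W x * Real.exp (t * N x) := by
  classical
  rw [Finset.mul_sum]
  calc ∑ x ∈ Finset.univ.filter (fun x => a ≤ N x), W x
      ≤ ∑ x ∈ Finset.univ.filter (fun x => a ≤ N x),
          Real.exp (-(t * a)) * (W x * Real.exp (t * N x)) := by
        refine Finset.sum_le_sum fun x hx => ?_
        rw [Finset.mem_filter] at hx
        have h2 : (1:ℝ) ≤ Real.exp (-(t*a)) * Real.exp (t * N x) := by
          rw [← Real.exp_add]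
          rw [show -(t*a) + t * N x = t * (N x - a) by ring]
          rw [← Real.exp_zero]
          exact Real.exp_le_exp.mpr (mul_nonneg ht (by linarith [hx.2]))
        calc W x = W x * 1 := (mul_one _).symm
          _ ≤ W x * (Real.exp (-(t*a)) * Real.exp (t * N x)) :=
              mul_le_mul_of_nonneg_left h2 (hW x)
          _ = Real.exp (-(t*a)) * (W x * Real.exp (t * N x)) := by ring
    _ ≤ ∑ x, Real.exp (-(t * a)) * (W x * Real.exp (t * N x)) := by
        refine Finset.sum_le_sum_of_subset_of_nonneg (Finset.filter_subset _ _) fun x _ _ => ?_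
        exact mul_nonneg (Real.exp_pos _).le (mul_nonneg (hW x) (Real.exp_pos _).le)

/-- Markov/Chernoff bound, lower tail -/
lemma markov_le {α : Type*} [Fintype α] (W N : α → ℝ) (hW : ∀ x, 0 ≤ W x)
    {t : ℝ} (ht : t ≤ 0) (a : ℝ) :
    ∑ x ∈ Finset.univ.filter (fun x => N x ≤ a), W x
      ≤ Real.exp (-(t * a)) * ∑ x, W x * Real.exp (t * N x) := by
  classical
  rw [Finset.mul_sum]
  calc ∑ x ∈ Finset.univ.filter (fun x => N x ≤ a), W x
      ≤ ∑ x ∈ Finset.univ.filter (fun x => N x ≤ a),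
          Real.exp (-(t * a)) * (W x * Real.exp (t * N x)) := by
        refine Finset.sum_le_sum fun x hx => ?_
        rw [Finset.mem_filter] at hx
        have h2 : (1:ℝ) ≤ Real.exp (-(t*a)) * Real.exp (t * N x) := by
          rw [← Real.exp_add]
          rw [show -(t*a) + t * N x = t * (N x - a) by ring]
          rw [← Real.exp_zero]
          refine Real.exp_le_exp.mpr ?_
          nlinarith [hx.2]
        calc W x = W x * 1 := (mul_one _).symm
          _ ≤ W x * (Real.exp (-(t*a)) * Real.exp (t * N x)) :=
              mul_le_mul_of_nonneg_left h2 (hW x)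
          _ = Real.exp (-(t*a)) * (W x * Real.exp (t * N x)) := by ring
    _ ≤ ∑ x, Real.exp (-(t * a)) * (W x * Real.exp (t * N x)) := by
        refine Finset.sum_le_sum_of_subset_of_nonneg (Finset.filter_subset _ _) fun x _ _ => ?_
        exact mul_nonneg (Real.exp_pos _).le (mul_nonneg (hW x) (Real.exp_pos _).le)

/-- quadratic upper bound on exp near 0 -/
lemma exp_le_quad {x : ℝ} (hx : |x| ≤ 1) : Real.exp x ≤ 1 + x + x ^ 2 := by
  have h := Real.exp_bound hx (n := 2) (by norm_num)
  have h2 : ∑ m ∈ Finset.range 2, x ^ m / m.factorial = 1 + x := by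
    simp [Finset.sum_range_succ]
  rw [h2] at h
  norm_num [Nat.factorial] at h
  have h3 := (abs_sub_le_iff.mp h).1
  have h4 : |x| ^ 2 = x ^ 2 := sq_abs x
  nlinarith [sq_nonneg x]

lemma sum_biUnion_le' {α β : Type*} [DecidableEq β] (A : Finset α) (G : α → Finset β)
    (w : β → ℝ) (hw : ∀ b, 0 ≤ w b) :
    ∑ b ∈ A.biUnion G, w b ≤ ∑ a ∈ A, ∑ b ∈ G a, w b := by
  classical
  induction A using Finset.induction_on with
  | empty => simp
  | insert a A' ha ih =>
    rw [Finset.biUnion_insert, Finset.sum_insert ha]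
    calc ∑ b ∈ G a ∪ A'.biUnion G, w b
        ≤ ∑ b ∈ G a, w b + ∑ b ∈ A'.biUnion G, w b := by
          have := Finset.sum_union_inter (s₁ := G a) (s₂ := A'.biUnion G) (f := w)
          have h2 : 0 ≤ ∑ b ∈ G a ∩ A'.biUnion G, w b := Finset.sum_nonneg fun b _ => hw b
          linarith
      _ ≤ ∑ b ∈ G a, w b + ∑ a ∈ A', ∑ b ∈ G a, w b := by linarith [ih]

section PerU

variable {n k : ℕ} (p : ℝ) (S : Finset (Fin k)) (u : Fin k → Fin n)

lemma per_u_bound (hp0 : 0 < p) (hp1 : p < 1) (hu : Function.Injective u)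
    {ε : ℝ} (hε : 0 < ε) (hkn : k ≤ n) :
    ∑ f ∈ Finset.univ.filter (fun f : EdgeT n → Bool =>
        ¬ |(∑ v : Fin n, chi S u v f) - p ^ S.card * (1 - p) ^ (k - S.card) * n| < ε * n),
      ∏ e, wB p (f e)
    ≤ 2 * Real.exp (min ε 1 / 2 * k + n * (min ε 1 / 2 * (min ε 1 / 2 - ε))) := by
  classical
  set s : ℝ := min ε 1 / 2 with hs
  have hs0 : 0 < s := by positivity
  have hs1 : s ≤ 1/2 := by
    rw [hs]; have := min_le_right ε 1; linarith
  have hsε : s ≤ ε / 2 := by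
    rw [hs]; have := min_le_left ε 1; linarith
  set q : ℝ := p ^ S.card * (1 - p) ^ (k - S.card) with hqdef
  have hq_eq : q = ∏ i : Fin k, wB p (bS S i) := (qv_eq p S).symm
  have hp1' : (0:ℝ) ≤ 1 - p := by linarith
  have hq0 : 0 ≤ q := mul_nonneg (pow_nonneg hp0.le _) (pow_nonneg hp1' _)
  have hq1 : q ≤ 1 := mul_le_one₀ (pow_le_one₀ hp0.le hp1.le) (pow_nonneg hp1' _)
    (pow_le_one₀ hp1' (by linarith))
  have hWnn : ∀ f : EdgeT n → Bool, 0 ≤ ∏ e, wB p (f e) :=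
    fun f => Finset.prod_nonneg fun e _ => wB_nonneg hp0.le hp1.le _
  have habs : |s| ≤ 1 := by rw [abs_of_pos hs0]; linarith
  have hnk : ((n - k : ℕ) : ℝ) ≤ (n : ℝ) := Nat.cast_le.mpr (Nat.sub_le n k)
  have hnkc : ((n - k : ℕ) : ℝ) = (n : ℝ) - (k : ℝ) := by
    rw [Nat.cast_sub hkn]
  have hn0 : (0:ℝ) ≤ (n:ℝ) := Nat.cast_nonneg n
  have hk0 : (0:ℝ) ≤ (k:ℝ) := Nat.cast_nonneg k
  -- split the bad event
  have hsplit : Finset.univ.filter (fun f : EdgeT n → Bool =>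
        ¬ |(∑ v : Fin n, chi S u v f) - q * n| < ε * n)
      ⊆ (Finset.univ.filter (fun f : EdgeT n → Bool =>
            q * n + ε * n ≤ ∑ v : Fin n, chi S u v f))
        ∪ (Finset.univ.filter (fun f : EdgeT n → Bool =>
            (∑ v : Fin n, chi S u v f) ≤ q * n - ε * n)) := by
    intro f hf
    rw [Finset.mem_filter, not_lt] at hf
    rw [Finset.mem_union, Finset.mem_filter, Finset.mem_filter]
    rcases le_abs.mp hf.2 with h | h
    · left; exact ⟨Finset.mem_univ f, by linarith⟩
    · right; exact ⟨Finset.mem_univ f, by linarith⟩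
  -- upper tail
  have hupper : ∑ f ∈ Finset.univ.filter (fun f : EdgeT n → Bool =>
        q * n + ε * n ≤ ∑ v : Fin n, chi S u v f), ∏ e, wB p (f e)
      ≤ Real.exp ((n:ℝ) * (s * (s - ε))) := by
    have hm := markov_ge (fun f : EdgeT n → Bool => ∏ e, wB p (f e))
      (fun f => ∑ v : Fin n, chi S u v f) hWnn hs0.le (q * n + ε * n)
    rw [Z_eq p S u hp0.le hp1.le hu s, ← hq_eq] at hm
    have hc : Real.exp s - 1 ≤ s + s ^ 2 := by
      have := exp_le_quad habs; linarith
    have hc0 : 0 ≤ Real.exp s - 1 := by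
      have := Real.add_one_le_exp s; linarith
    refine hm.trans ?_
    have b1 : ((Real.exp s - 1) * q + 1) ^ (n - k)
        ≤ Real.exp ((n:ℝ) * ((Real.exp s - 1) * q)) := by
      calc ((Real.exp s - 1) * q + 1) ^ (n - k)
          ≤ Real.exp ((Real.exp s - 1) * q) ^ (n - k) :=
            pow_le_pow_left₀ (by nlinarith) (Real.add_one_le_exp _) _
        _ = Real.exp (((n - k : ℕ):ℝ) * ((Real.exp s - 1) * q)) := by
            rw [← Real.exp_nat_mul]
        _ ≤ Real.exp ((n:ℝ) * ((Real.exp s - 1) * q)) := by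
            apply Real.exp_le_exp.mpr
            exact mul_le_mul_of_nonneg_right hnk (mul_nonneg hc0 hq0)
    calc Real.exp (-(s * (q * n + ε * n))) * ((Real.exp s - 1) * q + 1) ^ (n - k)
        ≤ Real.exp (-(s * (q * n + ε * n)))
            * Real.exp ((n:ℝ) * ((Real.exp s - 1) * q)) :=
          mul_le_mul_of_nonneg_left b1 (Real.exp_pos _).le
      _ = Real.exp (-(s * (q * n + ε * n)) + (n:ℝ) * ((Real.exp s - 1) * q)) :=
          (Real.exp_add _ _).symm
      _ ≤ Real.exp ((n:ℝ) * (s * (s - ε))) := by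
          apply Real.exp_le_exp.mpr
          have key : (Real.exp s - 1) * q ≤ s * q + s ^ 2 := by nlinarith
          nlinarith [mul_le_mul_of_nonneg_left key hn0]
  -- lower tail
  have hlower : ∑ f ∈ Finset.univ.filter (fun f : EdgeT n → Bool =>
        (∑ v : Fin n, chi S u v f) ≤ q * n - ε * n), ∏ e, wB p (f e)
      ≤ Real.exp (s * k + (n:ℝ) * (s * (s - ε))) := by
    have hm := markov_le (fun f : EdgeT n → Bool => ∏ e, wB p (f e))
      (fun f => ∑ v : Fin n, chi S u v f) hWnn (neg_nonpos.mpr hs0.le) (q * n - ε * n)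
    rw [Z_eq p S u hp0.le hp1.le hu (-s), ← hq_eq] at hm
    have hc : Real.exp (-s) - 1 ≤ -s + s ^ 2 := by
      have h := exp_le_quad (x := -s) (by rwa [abs_neg]); nlinarith
    have hd1 : -1 ≤ Real.exp (-s) - 1 := by
      have := Real.exp_pos (-s); linarith
    have hdq : (0:ℝ) ≤ (Real.exp (-s) - 1) * q + 1 := by nlinarith
    refine hm.trans ?_
    have b1 : ((Real.exp (-s) - 1) * q + 1) ^ (n - k)
        ≤ Real.exp (((n:ℝ) - k) * ((Real.exp (-s) - 1) * q)) := by
      calc ((Real.exp (-s) - 1) * q + 1) ^ (n - k)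
          ≤ Real.exp ((Real.exp (-s) - 1) * q) ^ (n - k) :=
            pow_le_pow_left₀ hdq (Real.add_one_le_exp _) _
        _ = Real.exp (((n - k : ℕ):ℝ) * ((Real.exp (-s) - 1) * q)) := by
            rw [← Real.exp_nat_mul]
        _ = Real.exp (((n:ℝ) - k) * ((Real.exp (-s) - 1) * q)) := by rw [hnkc]
    calc Real.exp (-(-s * (q * n - ε * n))) * ((Real.exp (-s) - 1) * q + 1) ^ (n - k)
        ≤ Real.exp (-(-s * (q * n - ε * n)))
            * Real.exp (((n:ℝ) - k) * ((Real.exp (-s) - 1) * q)) :=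
          mul_le_mul_of_nonneg_left b1 (Real.exp_pos _).le
      _ = Real.exp (-(-s * (q * n - ε * n)) + ((n:ℝ) - k) * ((Real.exp (-s) - 1) * q)) :=
          (Real.exp_add _ _).symm
      _ ≤ Real.exp (s * k + (n:ℝ) * (s * (s - ε))) := by
          apply Real.exp_le_exp.mpr
          have hnk' : (0:ℝ) ≤ (n:ℝ) - k := by linarith [(Nat.cast_le (α := ℝ)).mpr hkn]
          have key : ((n:ℝ) - k) * ((Real.exp (-s) - 1) * q)
              ≤ ((n:ℝ) - k) * ((-s + s ^ 2) * q) := by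
            apply mul_le_mul_of_nonneg_left _ hnk'
            exact mul_le_mul_of_nonneg_right hc hq0
          have A1 : q * (s * k) ≤ s * k :=
            mul_le_of_le_one_left (mul_nonneg hs0.le hk0) hq1
          have A2 : ((n:ℝ) - k) * (q * s ^ 2) ≤ (n:ℝ) * s ^ 2 := by
            calc ((n:ℝ) - k) * (q * s ^ 2) ≤ ((n:ℝ) - k) * s ^ 2 :=
                mul_le_mul_of_nonneg_left
                  (mul_le_of_le_one_left (sq_nonneg s) hq1) hnk'
              _ ≤ (n:ℝ) * s ^ 2 :=
                mul_le_mul_of_nonneg_right (by linarith) (sq_nonneg s)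
          nlinarith [key, A1, A2]
  -- combine
  have hcomb : ∑ f ∈ Finset.univ.filter (fun f : EdgeT n → Bool =>
        ¬ |(∑ v : Fin n, chi S u v f) - q * n| < ε * n), ∏ e, wB p (f e)
      ≤ Real.exp ((n:ℝ) * (s * (s - ε))) + Real.exp (s * k + (n:ℝ) * (s * (s - ε))) := by
    calc ∑ f ∈ Finset.univ.filter (fun f : EdgeT n → Bool =>
          ¬ |(∑ v : Fin n, chi S u v f) - q * n| < ε * n), ∏ e, wB p (f e)
        ≤ ∑ f ∈ ((Finset.univ.filter (fun f : EdgeT n → Bool =>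
              q * n + ε * n ≤ ∑ v : Fin n, chi S u v f))
            ∪ (Finset.univ.filter (fun f : EdgeT n → Bool =>
              (∑ v : Fin n, chi S u v f) ≤ q * n - ε * n))), ∏ e, wB p (f e) :=
          Finset.sum_le_sum_of_subset_of_nonneg hsplit (fun f _ _ => hWnn f)
      _ ≤ _ := by
          have h1 := Finset.sum_union_inter
            (s₁ := Finset.univ.filter (fun f : EdgeT n → Bool =>
              q * n + ε * n ≤ ∑ v : Fin n, chi S u v f))
            (s₂ := Finset.univ.filter (fun f : EdgeT n → Bool =>
              (∑ v : Fin n, chi S u v f) ≤ q * n - ε * n))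
            (f := fun f => ∏ e, wB p (f e))
          have h2 : (0:ℝ) ≤ ∑ f ∈ ((Finset.univ.filter (fun f : EdgeT n → Bool =>
              q * n + ε * n ≤ ∑ v : Fin n, chi S u v f))
            ∩ (Finset.univ.filter (fun f : EdgeT n → Bool =>
              (∑ v : Fin n, chi S u v f) ≤ q * n - ε * n))), ∏ e, wB p (f e) :=
            Finset.sum_nonneg fun f _ => hWnn f
          linarith [hupper, hlower]
  refine hcomb.trans ?_
  have : (0:ℝ) ≤ s * k := mul_nonneg hs0.le hk0
  have h3 : Real.exp ((n:ℝ) * (s * (s - ε))) ≤ Real.exp (s * k + (n:ℝ) * (s * (s - ε))) := by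
    apply Real.exp_le_exp.mpr; linarith
  linarith

end PerU


lemma ncard_eq_sum_chi_graph {n k : ℕ} (S : Finset (Fin k)) (u : Fin k → Fin n)
    (f : EdgeT n → Bool) :
    (({v : Fin n | (∀ i : Fin k, v ≠ u i) ∧
        (∀ i : Fin k, (graphOf n f).Adj v (u i) ↔ i ∈ S)}).ncard : ℝ)
      = ∑ v : Fin n, chi S u v f :=
  ncard_eq_sum_chi S u f

/-- the good predicate in the theorem -/
def goodPred (k : ℕ) (p ε : ℝ) (S : Finset (Fin k)) (n : ℕ) (f : EdgeT n → Bool) : Prop :=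
  ∀ u : Fin k → Fin n, Function.Injective u →
    |({v : Fin n | (∀ i : Fin k, v ≠ u i) ∧
        (∀ i : Fin k, (graphOf n f).Adj v (u i) ↔ i ∈ S)}.ncard : ℝ)
      - p ^ S.card * (1 - p) ^ (k - S.card) * n| < ε * n

/-- Fix k ≥ 1, p ∈ (0,1), ε > 0 and S ⊆ Fin k. A.a.s. G(n, p) satisfies:
for every injective k-tuple u of vertices, the number N of vertices v outside the tuple
adjacent to u i exactly for i ∈ S satisfies |N − p^|S|·(1−p)^(k−|S|)·n| < ε·n. -/
theorem erdosRenyi_extension_counts_concentrated_aas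
    (k : ℕ) (hk : 1 ≤ k) (p : ℝ) (hp0 : 0 < p) (hp1 : p < 1)
    (ε : ℝ) (hε : 0 < ε) (S : Finset (Fin k)) :
    Tendsto (fun n : ℕ =>
      erMeasure n (ENNReal.ofReal p) (ENNReal.ofReal_le_one.mpr hp1.le)
        {f | ∀ u : Fin k → Fin n, Function.Injective u →
          |({v : Fin n | (∀ i : Fin k, v ≠ u i) ∧
              (∀ i : Fin k, (graphOf n f).Adj v (u i) ↔ i ∈ S)}.ncard : ℝ)
            - p ^ S.card * (1 - p) ^ (k - S.card) * n| < ε * n})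
      atTop (nhds 1) := by
  classical
  have hm : 0 < min ε 1 / 2 := by positivity
  have hmε : min ε 1 / 2 < ε := by
    have := min_le_left ε 1; linarith
  set Pbad : ℕ → ℝ := fun n => ∑ f ∈ Finset.univ.filter
      (fun f : EdgeT n → Bool => ¬ goodPred k p ε S n f), ∏ e, wB p (f e) with hPbad
  -- measure identity
  have hmeas : ∀ n : ℕ,
      erMeasure n (ENNReal.ofReal p) (ENNReal.ofReal_le_one.mpr hp1.le)
        {f : EdgeT n → Bool | goodPred k p ε S n f} = ENNReal.ofReal (1 - Pbad n) := by
    intro n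
    rw [erMeasure_set hp0.le (ENNReal.ofReal_le_one.mpr hp1.le)]
    congr 1
    have h1 : Finset.univ.filter (· ∈ {f : EdgeT n → Bool | goodPred k p ε S n f})
        = Finset.univ.filter (fun f => goodPred k p ε S n f) := by
      refine Finset.filter_congr fun f _ => ?_
      simp [Set.mem_setOf_eq]
    rw [h1]
    have h2 := Finset.sum_filter_add_sum_filter_not Finset.univ
      (fun f : EdgeT n → Bool => goodPred k p ε S n f) (fun f => ∏ e, wB p (f e))
    rw [total_mass hp1.le] at h2
    rw [hPbad]
    linarith
  -- union bound
  have hWnn : ∀ n : ℕ, ∀ f : EdgeT n → Bool, 0 ≤ ∏ e, wB p (f e) :=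
    fun n f => Finset.prod_nonneg fun e _ => wB_nonneg hp0.le hp1.le _
  have hPbound : ∀ n : ℕ, k ≤ n → Pbad n ≤
      ((n:ℝ))^k * (2 * Real.exp (min ε 1 / 2 * k
        + n * (min ε 1 / 2 * (min ε 1 / 2 - ε)))) := by
    intro n hkn
    rw [hPbad]
    have hsub : Finset.univ.filter (fun f : EdgeT n → Bool => ¬ goodPred k p ε S n f)
        ⊆ (Finset.univ : Finset (Fin k → Fin n)).biUnion (fun u =>
            Finset.univ.filter (fun f : EdgeT n → Bool => Function.Injective u ∧
              ¬ |(∑ v : Fin n, chi S u v f)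
                  - p ^ S.card * (1 - p) ^ (k - S.card) * n| < ε * n)) := by
      intro f hf
      rw [Finset.mem_filter] at hf
      have hf2 := hf.2
      rw [goodPred] at hf2
      push_neg at hf2
      obtain ⟨u, hu, hge⟩ := hf2
      rw [Finset.mem_biUnion]
      refine ⟨u, Finset.mem_univ u, Finset.mem_filter.mpr ⟨Finset.mem_univ f, hu, ?_⟩⟩
      rw [not_lt, ← ncard_eq_sum_chi_graph S u f]
      exact hge
    refine (Finset.sum_le_sum_of_subset_of_nonneg hsub (fun f _ _ => hWnn n f)).trans ?_
    refine (sum_biUnion_le' _ _ _ (hWnn n)).trans ?_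
    have hper : ∀ u : Fin k → Fin n,
        ∑ f ∈ Finset.univ.filter (fun f : EdgeT n → Bool => Function.Injective u ∧
            ¬ |(∑ v : Fin n, chi S u v f)
                - p ^ S.card * (1 - p) ^ (k - S.card) * n| < ε * n), ∏ e, wB p (f e)
          ≤ 2 * Real.exp (min ε 1 / 2 * k + n * (min ε 1 / 2 * (min ε 1 / 2 - ε))) := by
      intro u
      by_cases hu : Function.Injective u
      · refine le_trans (Finset.sum_le_sum_of_subset_of_nonneg ?_ (fun f _ _ => hWnn n f))
          (per_u_bound p S u hp0 hp1 hu hε hkn)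
        intro f hf
        rw [Finset.mem_filter] at hf ⊢
        exact ⟨hf.1, hf.2.2⟩
      · have hempty : Finset.univ.filter (fun f : EdgeT n → Bool => Function.Injective u ∧
            ¬ |(∑ v : Fin n, chi S u v f)
                - p ^ S.card * (1 - p) ^ (k - S.card) * n| < ε * n) = ∅ := by
          rw [Finset.filter_eq_empty_iff]
          intro f _
          simp [hu]
        rw [hempty, Finset.sum_empty]
        positivity
    calc ∑ u : Fin k → Fin n, ∑ f ∈ Finset.univ.filter
          (fun f : EdgeT n → Bool => Function.Injective u ∧
            ¬ |(∑ v : Fin n, chi S u v f)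
                - p ^ S.card * (1 - p) ^ (k - S.card) * n| < ε * n), ∏ e, wB p (f e)
        ≤ ∑ _u : Fin k → Fin n,
            2 * Real.exp (min ε 1 / 2 * k + n * (min ε 1 / 2 * (min ε 1 / 2 - ε))) :=
          Finset.sum_le_sum fun u _ => hper u
      _ = ((n:ℝ))^k * (2 * Real.exp (min ε 1 / 2 * k
            + n * (min ε 1 / 2 * (min ε 1 / 2 - ε)))) := by
          rw [Finset.sum_const, nsmul_eq_mul, Finset.card_univ, Fintype.card_fun,
            Fintype.card_fin, Fintype.card_fin]
          push_cast
          ring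
  -- the bound tends to zero
  set c : ℝ := min ε 1 / 2 * (ε - min ε 1 / 2) with hcdef
  have hc : 0 < c := by rw [hcdef]; nlinarith
  clear_value c
  have hB : Tendsto (fun n : ℕ => ((n:ℝ))^k * (2 * Real.exp (min ε 1 / 2 * k
      + n * (min ε 1 / 2 * (min ε 1 / 2 - ε))))) atTop (nhds 0) := by
    have h1 := Real.tendsto_pow_mul_exp_neg_atTop_nhds_zero k
    have h2 : Tendsto (fun n : ℕ => c * n) atTop atTop :=
      Tendsto.const_mul_atTop hc tendsto_natCast_atTop_atTop
    have h3 := h1.comp h2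
    have h4 := h3.const_mul (2 * Real.exp (min ε 1 / 2 * k) / c ^ k)
    rw [mul_zero] at h4
    refine Tendsto.congr (fun n => ?_) h4
    simp only [Function.comp_apply]
    have hck : c ^ k ≠ 0 := pow_ne_zero _ (ne_of_gt hc)
    have e1 : Real.exp (min ε 1 / 2 * k + n * (min ε 1 / 2 * (min ε 1 / 2 - ε)))
        = Real.exp (min ε 1 / 2 * k) * Real.exp (-(c * n)) := by
      rw [← Real.exp_add]
      congr 1
      rw [hcdef]
      ring
    rw [e1]
    have e2 : (2 * Real.exp (min ε 1 / 2 * k) / c ^ k)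
        * ((c * (n:ℝ)) ^ k * Real.exp (-(c * n)))
        = (c ^ k / c ^ k) * ((n:ℝ) ^ k
            * (2 * (Real.exp (min ε 1 / 2 * k) * Real.exp (-(c * n))))) := by
      rw [mul_pow]; ring
    rw [e2, div_self hck, one_mul]
  -- squeeze
  have hPbad0 : Tendsto Pbad atTop (nhds 0) := by
    refine tendsto_of_tendsto_of_tendsto_of_le_of_le' tendsto_const_nhds hB ?_ ?_
    · exact Eventually.of_forall fun n => Finset.sum_nonneg fun f _ => hWnn n f
    · filter_upwards [eventually_ge_atTop k] with n hn
      exact hPbound n hn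
  -- conclude
  have h1 : Tendsto (fun n : ℕ => 1 - Pbad n) atTop (nhds 1) := by
    have := (tendsto_const_nhds (x := (1:ℝ)) (f := (atTop : Filter ℕ))).sub hPbad0
    simpa using this
  have h2 := (ENNReal.continuous_ofReal.tendsto 1).comp h1
  have h3 : Tendsto (fun n : ℕ => ENNReal.ofReal (1 - Pbad n)) atTop (nhds 1) := by
    rw [ENNReal.ofReal_one] at h2; exact h2
  exact Tendsto.congr (fun n => (hmeas n).symm) h3
end
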